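/- For every n ≥ 10, every period k ≥ 1 of the set S_n = {a ∈ ℕ : there exists b with 1 < b < 2^n and b divides a} satisfies k ≥ 2^(2^n − 1). -/

import Mathlib

/-!
An integer lies in `{a | ∃ b, 1 < b ∧ b < 2 ^ n ∧ b ∣ a}` exactly when it has a prime factor
below `2 ^ n`. If a prime `p < 2 ^ n` did not divide the period `k`, then starting from a large
prime `q` outside the set, the numbers `q + j * k` would run through every residue class mod `p`,
so one of them would lie in the set although periodicity keeps them all out. Hence the primorial
of `2 ^ n - 1` divides `k`.

It remains to show `2 ^ N ≤ N#` for `N = 2 ^ n - 1`, a Chebyshev bound with constant better than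
`log 2`. The integer `(30t)! t! / ((15t)! (10t)! (6t)!)` divides `lcm(1, …, 30t)`, because
`⌊30x⌋ + ⌊x⌋ - ⌊15x⌋ - ⌊10x⌋ - ⌊6x⌋ ≤ 1`, and it grows by a factor of at least `2 ^ 38` from `t`
to `t + 1`; on the other hand `lcm(1, …, M)` exceeds `M#` by at most `M ^ π(√M)`.
-/

/-- `p` is a period of `S ⊆ ℕ`. -/
def IsPeriodNat (S : Set ℕ) (p : ℕ) : Prop :=
  ∃ n₀ : ℕ, ∀ a : ℕ, n₀ ≤ a → (a + p ∈ S ↔ a ∈ S)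

open Nat Finset
open scoped Nat.Prime

theorem Nat.Prime.exists_dvd_add_mul {p k : ℕ} (hp : p.Prime) (hk : ¬p ∣ k) (q : ℕ) :
    ∃ j, p ∣ q + j * k := by
  have := Fact.mk hp
  have hk' : (k : ZMod p) ≠ 0 := by rwa [Ne, ZMod.natCast_eq_zero_iff]
  refine ⟨(-(q : ZMod p) / k).val, ?_⟩
  rw [← ZMod.natCast_eq_zero_iff]
  push_cast
  rw [ZMod.natCast_val, ZMod.cast_id', id, div_mul_cancel₀ _ hk', add_neg_cancel]

namespace IsPeriodNat

theorem exists_add_mul_mem_iff {S : Set ℕ} {p : ℕ} (h : IsPeriodNat S p) :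
    ∃ n₀, ∀ a, n₀ ≤ a → ∀ j, (a + j * p ∈ S ↔ a ∈ S) := by
  obtain ⟨n₀, hn₀⟩ := h
  refine ⟨n₀, fun a ha j => ?_⟩
  induction j with
  | zero => simp
  | succ j ih => rw [add_one_mul, ← add_assoc, hn₀ _ (ha.trans (Nat.le_add_right _ _)), ih]

theorem prime_dvd {m k : ℕ} (h : IsPeriodNat {a | ∃ b, 1 < b ∧ b < m ∧ b ∣ a} k) {p : ℕ}
    (hp : p.Prime) (hpm : p < m) : p ∣ k := by
  obtain ⟨n₀, hn₀⟩ := h.exists_add_mul_mem_iff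
  by_contra hpk
  obtain ⟨q, hq, hq_prime⟩ := Nat.exists_infinite_primes (n₀ + m)
  obtain ⟨j, hj⟩ := hp.exists_dvd_add_mul hpk q
  obtain ⟨b, hb, hbm, hbq⟩ := (hn₀ q (by omega) j).mp ⟨p, hp.one_lt, hpm, hj⟩
  rcases hq_prime.eq_one_or_self_of_dvd b hbq with rfl | rfl <;> omega

theorem primorial_dvd {m k : ℕ} (h : IsPeriodNat {a | ∃ b, 1 < b ∧ b < m ∧ b ∣ a} k) :
    primorial (m - 1) ∣ k := by
  refine prod_primes_dvd k (fun p hp => (prime_of_mem_primesLE hp).prime) fun p hp => ?_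
  have := one_lt_of_mem_primesLE hp
  have := le_of_mem_primesLE hp
  exact h.prime_dvd (prime_of_mem_primesLE hp) (by omega)

end IsPeriodNat

namespace Nat

theorem primeCounting_le_div_two_add_one (m : ℕ) : π m ≤ m / 2 + 1 := by
  rcases lt_or_ge m 2 with hm | hm
  · interval_cases m <;> simp
  · obtain ⟨n, rfl⟩ := Nat.exists_eq_add_of_le hm
    have := primeCounting_add_le two_ne_zero le_rfl n
    rw [totient_two, one_mul] at this
    have h2 : π 2 = 1 := by decide
    omega

theorem pow_log_le_mul_ite {p M : ℕ} (hp : p.Prime) :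
    p ^ log p M ≤ p * if p ≤ sqrt M then M else 1 := by
  split_ifs with h
  · have hM : M ≠ 0 := by
      have := hp.two_le
      have := sqrt_le_self M
      omega
    exact (pow_log_le_self p hM).trans (Nat.le_mul_of_pos_left M hp.pos)
  · rw [mul_one]
    rcases eq_or_ne M 0 with rfl | hM
    · simp [hp.one_le]
    · refine (pow_le_pow_right₀ hp.one_le ?_).trans (pow_one p).le
      exact Nat.lt_succ_iff.mp (log_lt_of_lt_pow hM (sqrt_lt'.mp (not_le.mp h)))

theorem lcmUpto_le_primorial_mul_pow (M : ℕ) : lcmUpto M ≤ primorial M * M ^ π (sqrt M) := by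
  have hfilter : {p ∈ primesLE M | p ≤ sqrt M} = primesLE (sqrt M) := by
    ext p
    simp only [mem_filter, mem_primesLE]
    exact ⟨fun ⟨⟨_, hp⟩, h⟩ => ⟨h, hp⟩, fun ⟨h, hp⟩ => ⟨⟨h.trans (sqrt_le_self M), hp⟩, h⟩⟩
  calc lcmUpto M = ∏ p ∈ primesLE M, p ^ log p M := lcmUpto_eq_prod_pow_log M
    _ ≤ ∏ p ∈ primesLE M, p * if p ≤ sqrt M then M else 1 :=
      prod_le_prod' fun p hp => pow_log_le_mul_ite (prime_of_mem_primesLE hp)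
    _ = primorial M * M ^ π (sqrt M) := by
      rw [prod_mul_distrib, prod_ite, prod_const, prod_const_one, mul_one, hfilter,
        primesLE_card_eq_primeCounting, primorial_eq_prod_primesLE]

theorem nine_mul_sq_le_two_pow {n : ℕ} (hn : 10 ≤ n) : 9 * n ^ 2 ≤ 2 ^ n := by
  induction n, hn using le_induction with
  | base => norm_num
  | succ n hn ih => rw [pow_succ 2 n]; nlinarith [Nat.mul_le_mul_right n hn]

end Nat

namespace Chebyshev

def ratioNum (t : ℕ) : ℕ := (30 * t)! * t !

def ratioDen (t : ℕ) : ℕ := (15 * t)! * (10 * t)! * (6 * t)!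

theorem ratioDen_pos (t : ℕ) : 0 < ratioDen t := by
  unfold ratioDen
  positivity

theorem thirty_mul_div_add_div_le (x q : ℕ) :
    30 * x / q + x / q ≤ 15 * x / q + 10 * x / q + 6 * x / q + 1 := by
  have h (a c : ℕ) (hc : 0 < c) : a * c / q / c = a / q := by
    rw [Nat.div_div_eq_div_mul, Nat.mul_div_mul_right _ _ hc]
  rw [← h (15 * x) 2 two_pos, ← h (10 * x) 3 three_pos, ← h (6 * x) 5 (by norm_num),
    ← h x 30 (by norm_num)]
  ring_nf
  omega

theorem ratioNum_dvd (t : ℕ) : ratioNum t ∣ ratioDen t * lcmUpto (30 * t) := by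
  have hden := (ratioDen_pos t).ne'
  have hfac (c : ℕ) := factorial_ne_zero (c * t)
  refine (factorization_prime_le_iff_dvd (by unfold ratioNum; positivity)
    (mul_ne_zero hden (lcmUpto_ne_zero _))).mp fun p hp => ?_
  have hlog {m : ℕ} (hm : m ≤ 30 * t) : log p m < log p (30 * t) + 1 :=
    lt_succ_of_le (log_mono_right hm)
  rw [ratioNum, Nat.factorization_mul (hfac 30) (by simpa using hfac 1),
    Nat.factorization_mul hden (lcmUpto_ne_zero _), ratioDen,
    Nat.factorization_mul (mul_ne_zero (hfac 15) (hfac 10)) (hfac 6),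
    Nat.factorization_mul (hfac 15) (hfac 10)]
  simp only [Finsupp.add_apply, factorization_lcmUpto _ hp]
  rw [factorization_factorial hp (hlog le_rfl), factorization_factorial hp (hlog (by omega)),
    factorization_factorial hp (hlog (by omega)), factorization_factorial hp (hlog (by omega)),
    factorization_factorial hp (hlog (by omega))]
  have := sum_le_sum fun i (_ : i ∈ Ico 1 (log p (30 * t) + 1)) =>
    thirty_mul_div_add_div_le t (p ^ i)
  simpa [sum_add_distrib] using this

/-- The constant works because `(24 / 23) ^ 30 < 3 ^ 9 * 5 ^ 5 / 2 ^ 24`. -/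
theorem two_pow_mul_ascFactorial_le {t : ℕ} (ht : 23 ≤ t) :
    2 ^ 38 * ((15 * t + 1).ascFactorial 15 * (10 * t + 1).ascFactorial 10 *
      (6 * t + 1).ascFactorial 6) ≤ (30 * t + 1).ascFactorial 30 * (t + 1) := by
  have hratio : (23 * (t + 1)) ^ 30 ≤ (24 * t) ^ 30 := Nat.pow_le_pow_left (by omega) 30
  have hconst : 2 ^ 38 * 15 ^ 15 * 10 ^ 10 * 6 ^ 6 * 24 ^ 30 ≤ 30 ^ 30 * 23 ^ 30 := by norm_num
  have hpow : 2 ^ 38 * 15 ^ 15 * 10 ^ 10 * 6 ^ 6 * (t + 1) ^ 30 ≤ (30 * t) ^ 30 := by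
    rw [mul_pow, mul_pow] at hratio
    rw [mul_pow]
    refine Nat.le_of_mul_le_mul_right ?_ (pow_pos (by norm_num : 0 < 23) 30)
    calc 2 ^ 38 * 15 ^ 15 * 10 ^ 10 * 6 ^ 6 * (t + 1) ^ 30 * 23 ^ 30
        = 2 ^ 38 * 15 ^ 15 * 10 ^ 10 * 6 ^ 6 * (23 ^ 30 * (t + 1) ^ 30) := by ring
      _ ≤ 2 ^ 38 * 15 ^ 15 * 10 ^ 10 * 6 ^ 6 * (24 ^ 30 * t ^ 30) := by gcongr
      _ ≤ 30 ^ 30 * 23 ^ 30 * t ^ 30 := by rw [← mul_assoc]; gcongr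
      _ = 30 ^ 30 * t ^ 30 * 23 ^ 30 := by ring
  calc 2 ^ 38 * ((15 * t + 1).ascFactorial 15 * (10 * t + 1).ascFactorial 10 *
        (6 * t + 1).ascFactorial 6)
      ≤ 2 ^ 38 * ((15 * t + 15) ^ 15 * (10 * t + 10) ^ 10 * (6 * t + 6) ^ 6) := by
        gcongr <;> exact ascFactorial_le_pow_add _ _
    _ = 2 ^ 38 * 15 ^ 15 * 10 ^ 10 * 6 ^ 6 * (t + 1) ^ 30 * (t + 1) := by ring
    _ ≤ (30 * t) ^ 30 * (t + 1) := by gcongr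
    _ ≤ (30 * t + 1).ascFactorial 30 * (t + 1) :=
      Nat.mul_le_mul_right _ ((Nat.pow_le_pow_left (le_succ _) 30).trans
        (pow_succ_le_ascFactorial _ _))

theorem two_pow_mul_ratioDen_succ_mul_ratioNum_le {t : ℕ} (ht : 23 ≤ t) :
    2 ^ 38 * (ratioDen (t + 1) * ratioNum t) ≤ ratioNum (t + 1) * ratioDen t := by
  have h (c : ℕ) : (c * (t + 1))! = (c * t)! * (c * t + 1).ascFactorial c := by
    rw [factorial_mul_ascFactorial, mul_add_one]
  calc 2 ^ 38 * (ratioDen (t + 1) * ratioNum t)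
      = (2 ^ 38 * ((15 * t + 1).ascFactorial 15 * (10 * t + 1).ascFactorial 10 *
          (6 * t + 1).ascFactorial 6)) * (ratioNum t * ratioDen t) := by
        simp only [ratioNum, ratioDen, h]
        ring
    _ ≤ ((30 * t + 1).ascFactorial 30 * (t + 1)) * (ratioNum t * ratioDen t) :=
        Nat.mul_le_mul_right _ (two_pow_mul_ascFactorial_le ht)
    _ = ratioNum (t + 1) * ratioDen t := by
        simp only [ratioNum, h, factorial_succ]
        ring

theorem two_pow_mul_ratioDen_le {t : ℕ} (ht : 23 ≤ t) :
    2 ^ (38 * t) * ratioDen t ≤ ratioNum t := by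
  induction t, ht using le_induction with
  | base =>
    rw [pow_mul]
    simp only [ratioNum, ratioDen]
    norm_num
  | succ t ht ih =>
    refine Nat.le_of_mul_le_mul_right ?_ (ratioDen_pos t)
    calc 2 ^ (38 * (t + 1)) * ratioDen (t + 1) * ratioDen t
        = 2 ^ 38 * ratioDen (t + 1) * (2 ^ (38 * t) * ratioDen t) := by ring
      _ ≤ 2 ^ 38 * ratioDen (t + 1) * ratioNum t := by gcongr
      _ ≤ ratioNum (t + 1) * ratioDen t := by
        rw [mul_assoc]
        exact two_pow_mul_ratioDen_succ_mul_ratioNum_le ht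

theorem two_pow_le_lcmUpto {t : ℕ} (ht : 23 ≤ t) : 2 ^ (38 * t) ≤ lcmUpto (30 * t) := by
  refine Nat.le_of_mul_le_mul_left ?_ (ratioDen_pos t)
  calc ratioDen t * 2 ^ (38 * t) ≤ ratioNum t := by
        rw [mul_comm]
        exact two_pow_mul_ratioDen_le ht
    _ ≤ ratioDen t * lcmUpto (30 * t) :=
      Nat.le_of_dvd (mul_pos (ratioDen_pos t) (lcmUpto_pos _)) (ratioNum_dvd t)

end Chebyshev

theorem two_pow_le_primorial_two_pow_sub_one {n : ℕ} (hn : 10 ≤ n) :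
    2 ^ (2 ^ n - 1) ≤ primorial (2 ^ n - 1) := by
  set N := 2 ^ n - 1
  set t := N / 30
  set x := sqrt (2 ^ n)
  have h1024 : 2 ^ 10 ≤ 2 ^ n := Nat.pow_le_pow_right two_pos hn
  have hN : N + 1 = 2 ^ n := Nat.sub_add_cancel Nat.one_le_two_pow
  have hx : x * x ≤ 2 ^ n := sqrt_le _
  have h3n : 3 * n ≤ x := le_sqrt.mpr (by nlinarith [nine_mul_sq_le_two_pow hn])
  have hM : 30 * t ≤ N := Nat.mul_div_le N 30
  have hs : π (sqrt (30 * t)) ≤ x / 2 + 1 :=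
    (primeCounting_le_div_two_add_one _).trans (by gcongr; exact sqrt_le_sqrt (by omega))
  have hexp : N + n * (x / 2 + 1) ≤ 38 * t := by
    have : N < 30 * t + 30 := lt_mul_div_succ N (by norm_num)
    nlinarith [Nat.div_mul_le_self x 2]
  refine Nat.le_of_mul_le_mul_right (c := (2 ^ n) ^ (x / 2 + 1)) ?_ (by positivity)
  calc 2 ^ N * (2 ^ n) ^ (x / 2 + 1) = 2 ^ (N + n * (x / 2 + 1)) := by rw [← pow_mul, pow_add]
    _ ≤ 2 ^ (38 * t) := Nat.pow_le_pow_right two_pos hexp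
    _ ≤ lcmUpto (30 * t) := Chebyshev.two_pow_le_lcmUpto (by omega)
    _ ≤ primorial (30 * t) * (30 * t) ^ π (sqrt (30 * t)) := lcmUpto_le_primorial_mul_pow _
    _ ≤ primorial N * (2 ^ n) ^ (x / 2 + 1) := by
      gcongr
      · exact primorial_mono hM
      · omega
      · omega

theorem period_lower_bound (n : ℕ) (hn : 10 ≤ n) (k : ℕ) (hk : 1 ≤ k)
    (hper : IsPeriodNat {a : ℕ | ∃ b : ℕ, 1 < b ∧ b < 2 ^ n ∧ b ∣ a} k) :
    2 ^ (2 ^ n - 1) ≤ k :=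
  (two_pow_le_primorial_two_pow_sub_one hn).trans (Nat.le_of_dvd hk hper.primorial_dvd)
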